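/- arXiv:2106.13185 — 3 statements merged into one kernel-verified Lean document; each statement's English description precedes it below -/
import Mathlib

section
/- Let $k_F > 0$ and $B_F = \{k \in \mathbb{Z}^3 : |k| \leq k_F\}$ be the Fermi ball, with $N = |B_F|$. Then there exists a constant $C > 0$ (independent of $k_F$ and $q$) such that for every $q \in \mathbb{Z}^3$, the number of lattice points in $B_F$ whose translate by $-q$ lies outside $B_F$ satisfies $|B_F \cap (B_F^c + q)| \leq C |q| N^{2/3}$. -/
/-!
Attach to each lattice point `k` the unit cube `k + [0,1)³`; these cubes are disjoint and have
volume one. If `|k| ≤ k_F < |k - q|`, then `k_F - |q| < |k| ≤ k_F`, so the cube of `k` lies in the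
spherical shell `k_F - |q| - √3 ≤ |x| ≤ k_F + √3`, whose volume is at most
`3 (k_F + √3)² (|q| + 2√3) · vol(B(0,1))`, and `|q| ≥ 1` for `q ≠ 0`. Conversely the Fermi ball
contains the lattice cube `[-m, m]³` with `m = ⌊k_F / √3⌋`, so `N ≥ max(1, k_F / √3)³`, which
bounds `(k_F + √3)²` by a multiple of `N^{2/3}`.
-/

/-- Euclidean norm of a lattice point in ℤ³. -/
noncomputable def latNorm (q : Fin 3 → ℤ) : ℝ := Real.sqrt (∑ i, ((q i : ℝ))^2)

open MeasureTheory Measure Metric Module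

section AddHaar

variable {E : Type*} [NormedAddCommGroup E] [NormedSpace ℝ E] [MeasurableSpace E] [BorelSpace E]
  [FiniteDimensional ℝ E] [Nontrivial E] (μ : Measure E) [μ.IsAddHaarMeasure]

theorem addHaar_real_closedBall_diff_ball (x : E) {a b : ℝ} (ha : 0 ≤ a) (hab : a ≤ b) :
    μ.real (closedBall x b \ ball x a) =
      (b ^ finrank ℝ E - a ^ finrank ℝ E) * μ.real (ball 0 1) := by
  rw [measureReal_sdiff (ball_subset_closedBall.trans (closedBall_subset_closedBall hab))
      measurableSet_ball measure_closedBall_lt_top.ne,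
    ← addHaar_real_closedBall_eq_addHaar_real_ball,
    addHaar_real_closedBall μ x (ha.trans hab), addHaar_real_closedBall μ x ha, sub_mul]

end AddHaar

theorem pow_sub_pow_le_mul_sub {α : Type*} [CommRing α] [LinearOrder α] [IsStrictOrderedRing α]
    {a b : α} (ha : 0 ≤ a) (hab : a ≤ b) (n : ℕ) :
    b ^ n - a ^ n ≤ n * b ^ (n - 1) * (b - a) := by
  have h := abs_pow_sub_pow_le b a n
  rw [abs_of_nonneg (sub_nonneg.2 (pow_le_pow_left₀ ha hab n)), abs_of_nonneg (sub_nonneg.2 hab),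
    abs_of_nonneg (ha.trans hab), abs_of_nonneg ha, max_eq_left hab] at h
  linarith

theorem pow_le_rpow_div_of_pow_le {x y : ℝ} (hx : 0 ≤ x) {n : ℕ} (hn : n ≠ 0) (h : x ^ n ≤ y)
    (m : ℕ) : x ^ m ≤ y ^ ((m : ℝ) / n) :=
  calc x ^ m = (x ^ n) ^ ((m : ℝ) / n) := by
        rw [← Real.rpow_natCast x n, ← Real.rpow_mul hx, mul_div_cancel₀ _ (by exact_mod_cast hn),
          Real.rpow_natCast]
    _ ≤ y ^ ((m : ℝ) / n) := Real.rpow_le_rpow (pow_nonneg hx n) h (by positivity)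

namespace LatticePoint

variable {ι : Type*}

noncomputable def toEuclidean (k : ι → ℤ) : EuclideanSpace ℝ ι :=
  WithLp.toLp 2 fun i => (k i : ℝ)

@[simp]
theorem toEuclidean_apply (k : ι → ℤ) (i : ι) : toEuclidean k i = k i := rfl

theorem toEuclidean_sub (k l : ι → ℤ) : toEuclidean (k - l) = toEuclidean k - toEuclidean l := by
  ext i; simp

def latticeBall [Fintype ι] (R : ℝ) : Set (ι → ℤ) := {k | ‖toEuclidean k‖ ≤ R}

def unitCube (k : ι → ℤ) : Set (EuclideanSpace ℝ ι) :=
  WithLp.ofLp ⁻¹' Set.univ.pi fun i => Set.Ico (k i : ℝ) (k i + 1)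

theorem mem_unitCube {k : ι → ℤ} {x : EuclideanSpace ℝ ι} :
    x ∈ unitCube k ↔ ∀ i, ⌊x i⌋ = k i := by
  simp [unitCube, Int.floor_eq_iff]

theorem pairwise_disjoint_unitCube :
    Pairwise fun k l : ι → ℤ => Disjoint (unitCube k) (unitCube l) :=
  fun _ _ hkl => Set.disjoint_left.2 fun _ hk hl =>
    hkl (funext fun i => (mem_unitCube.1 hk i).symm.trans (mem_unitCube.1 hl i))

variable [Fintype ι]

theorem abs_le_norm_toEuclidean (k : ι → ℤ) (i : ι) : |(k i : ℝ)| ≤ ‖toEuclidean k‖ :=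
  PiLp.norm_apply_le (toEuclidean k) i

theorem one_le_norm_toEuclidean {k : ι → ℤ} (hk : k ≠ 0) : 1 ≤ ‖toEuclidean k‖ := by
  obtain ⟨i, hi⟩ := Function.ne_iff.1 hk
  calc (1 : ℝ) ≤ |(k i : ℝ)| := by exact_mod_cast Int.one_le_abs hi
    _ ≤ ‖toEuclidean k‖ := abs_le_norm_toEuclidean k i

theorem norm_toEuclidean_le {k : ι → ℤ} {m : ℝ} (hm : 0 ≤ m) (hk : ∀ i, |(k i : ℝ)| ≤ m) :
    ‖toEuclidean k‖ ≤ √(Fintype.card ι) * m := by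
  rw [EuclideanSpace.norm_eq, ← Real.sqrt_sq hm, ← Real.sqrt_mul (Nat.cast_nonneg _)]
  refine Real.sqrt_le_sqrt ?_
  calc ∑ i, ‖toEuclidean k i‖ ^ 2 ≤ ∑ _i : ι, m ^ 2 := by
        gcongr with i
        simpa using hk i
    _ = _ := by simp

theorem finite_latticeBall (R : ℝ) : (latticeBall R : Set (ι → ℤ)).Finite := by
  refine (Set.Finite.pi fun _ : ι => Set.finite_Icc (-⌈R⌉) ⌈R⌉).subset fun k hk i _ => ?_
  have hki := (abs_le_norm_toEuclidean k i).trans (hk.trans (Int.le_ceil R))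
  rw [abs_le] at hki
  exact ⟨by exact_mod_cast hki.1, by exact_mod_cast hki.2⟩

theorem measurableSet_unitCube (k : ι → ℤ) : MeasurableSet (unitCube k) :=
  (PiLp.volume_preserving_ofLp ι).measurable (MeasurableSet.univ_pi fun _ => measurableSet_Ico)

theorem volume_unitCube (k : ι → ℤ) : volume (unitCube k) = 1 := by
  rw [unitCube, (PiLp.volume_preserving_ofLp ι).measure_preimage
    (MeasurableSet.univ_pi fun _ => measurableSet_Ico).nullMeasurableSet, volume_pi_pi]
  simp

theorem norm_sub_toEuclidean_le {k : ι → ℤ} {x : EuclideanSpace ℝ ι} (hx : x ∈ unitCube k) :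
    ‖x - toEuclidean k‖ ≤ √(Fintype.card ι) := by
  rw [EuclideanSpace.norm_eq, ← mul_one (Fintype.card ι : ℝ)]
  refine Real.sqrt_le_sqrt ?_
  calc ∑ i, ‖(x - toEuclidean k) i‖ ^ 2 ≤ ∑ _i : ι, (1 : ℝ) := by
        gcongr with i
        have hxk : (x - toEuclidean k) i = Int.fract (x i) := by
          simp [Int.fract, mem_unitCube.1 hx i]
        rw [hxk, Real.norm_of_nonneg (Int.fract_nonneg _)]
        exact pow_le_one₀ (Int.fract_nonneg _) (Int.fract_lt_one _).le
    _ = _ := by simp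

theorem ncard_le_volume {S : Set (ι → ℤ)} {A : Set (EuclideanSpace ℝ ι)}
    (hA : ∀ k ∈ S, unitCube k ⊆ A) : (S.ncard : ENNReal) ≤ volume A := by
  by_cases hS : S.Finite
  swap; · simp [Set.Infinite.ncard hS]
  calc (S.ncard : ENNReal) = volume (⋃ k ∈ hS.toFinset, unitCube k) := by
        rw [measure_biUnion_finset (pairwise_disjoint_unitCube.set_pairwise _)
          fun k _ => measurableSet_unitCube k]
        simp [volume_unitCube, Set.ncard_eq_toFinset_card S hS]
    _ ≤ volume A := measure_mono (Set.iUnion₂_subset fun k hk => hA k (hS.mem_toFinset.1 hk))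

theorem max_one_pow_le_ncard_latticeBall {R : ℝ} (hR : 0 ≤ R) :
    max 1 (R / √(Fintype.card ι)) ^ Fintype.card ι ≤ ((latticeBall R : Set (ι → ℤ)).ncard : ℝ) := by
  classical
  set s := √(Fintype.card ι)
  set m := ⌊R / s⌋₊
  set box : Finset (ι → ℤ) := Fintype.piFinset fun _ => Finset.Icc (-(m : ℤ)) m
  have hbox : (box : Set (ι → ℤ)) ⊆ latticeBall R := by
    intro k hk
    have hkm : ∀ i, |(k i : ℝ)| ≤ m := fun i => by
      have := Finset.mem_Icc.1 (Fintype.mem_piFinset.1 (Finset.mem_coe.1 hk) i)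
      exact abs_le.2 ⟨by exact_mod_cast this.1, by exact_mod_cast this.2⟩
    refine (norm_toEuclidean_le m.cast_nonneg hkm).trans ?_
    rcases (Real.sqrt_nonneg _).eq_or_lt with hs | hs
    · rw [← hs, zero_mul]; exact hR
    · exact (le_div_iff₀' hs).1 (Nat.floor_le (div_nonneg hR hs.le))
  have hm : max 1 (R / s) ≤ 2 * m + 1 := by
    have := Nat.lt_floor_add_one (R / s)
    refine max_le ?_ ?_ <;> linarith [m.cast_nonneg (α := ℝ)]
  calc max 1 (R / s) ^ Fintype.card ι ≤ (2 * m + 1 : ℝ) ^ Fintype.card ι :=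
        pow_le_pow_left₀ (zero_le_one.trans (le_max_left _ _)) hm _
    _ = ((box : Set (ι → ℤ)).ncard : ℝ) := by
        rw [Set.ncard_coe_finset, Fintype.card_piFinset, Finset.prod_const, Finset.card_univ,
          Int.card_Icc, show (m : ℤ) + 1 - -(m : ℤ) = ((2 * m + 1 : ℕ) : ℤ) by push_cast; ring,
          Int.toNat_natCast]
        push_cast; rfl
    _ ≤ _ := by exact_mod_cast Set.ncard_le_ncard hbox (finite_latticeBall R)

theorem ncard_leaving_latticeBall_le [Nonempty ι] {R : ℝ} (hR : 0 ≤ R) (q : ι → ℤ) :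
    ({k ∈ latticeBall R | k - q ∉ latticeBall R}.ncard : ℝ) ≤
      Fintype.card ι * (R + √(Fintype.card ι)) ^ (Fintype.card ι - 1) *
        (‖toEuclidean q‖ + 2 * √(Fintype.card ι)) *
          volume.real (ball (0 : EuclideanSpace ℝ ι) 1) := by
  set n := Fintype.card ι
  set Q := ‖toEuclidean q‖
  set b := R + √n
  set a := max (R - Q - √n) 0
  have hab : a ≤ b := max_le (by linarith [norm_nonneg (toEuclidean q), Real.sqrt_nonneg n])
    (by positivity)
  have hcubes : ∀ k ∈ {k ∈ latticeBall R | k - q ∉ latticeBall R},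
      unitCube k ⊆ closedBall 0 b \ ball 0 a := by
    rintro k ⟨hkR, hkq⟩ x hx
    simp only [latticeBall, Set.mem_ofPred_eq, toEuclidean_sub, not_le] at hkR hkq
    have hxk := norm_sub_toEuclidean_le hx
    have h1 := norm_sub_le (toEuclidean k) (toEuclidean q)
    have h2 := norm_le_norm_add_norm_sub' x (toEuclidean k)
    have h3 := norm_le_norm_add_norm_sub' (toEuclidean k) x
    rw [norm_sub_rev] at h3
    simp only [Set.mem_sdiff, mem_closedBall, mem_ball, dist_zero_right, not_lt]
    exact ⟨by linarith, max_le (by linarith) (norm_nonneg x)⟩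
  calc _ ≤ volume.real (closedBall (0 : EuclideanSpace ℝ ι) b \ ball 0 a) := by
        simpa [measureReal_def] using ENNReal.toReal_mono (measure_ne_top_of_subset
          Set.sdiff_subset measure_closedBall_lt_top.ne) (ncard_le_volume hcubes)
    _ = (b ^ n - a ^ n) * volume.real (ball (0 : EuclideanSpace ℝ ι) 1) := by
        rw [addHaar_real_closedBall_diff_ball volume 0 (le_max_right _ _) hab,
          finrank_euclideanSpace]
    _ ≤ n * b ^ (n - 1) * (b - a) * volume.real (ball (0 : EuclideanSpace ℝ ι) 1) := by
        gcongr
        exact pow_sub_pow_le_mul_sub (le_max_right _ _) hab n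
    _ ≤ _ := by
        gcongr
        linarith [le_max_left (R - Q - √n) 0]

theorem exists_ncard_leaving_latticeBall_le [Nonempty ι] :
    ∃ C > 0, ∀ R : ℝ, 0 ≤ R → ∀ q : ι → ℤ,
      ({k ∈ latticeBall R | k - q ∉ latticeBall R}.ncard : ℝ) ≤
        C * ‖toEuclidean q‖ * ((latticeBall R : Set (ι → ℤ)).ncard : ℝ) ^
          (((Fintype.card ι : ℝ) - 1) / Fintype.card ι) := by
  set n := Fintype.card ι
  set V := volume.real (ball (0 : EuclideanSpace ℝ ι) 1)
  have hn : 0 < n := Fintype.card_pos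
  have hs : 0 < √n := Real.sqrt_pos.2 (by exact_mod_cast hn)
  have hV : 0 < V :=
    ENNReal.toReal_pos (measure_ball_pos _ _ one_pos).ne' measure_ball_lt_top.ne
  refine ⟨n * (2 * √n) ^ (n - 1) * (1 + 2 * √n) * V, by positivity, fun R hR q => ?_⟩
  rcases eq_or_ne q 0 with rfl | hq
  · have hempty : {k ∈ latticeBall R | k - (0 : ι → ℤ) ∉ latticeBall R} = ∅ := by simp
    rw [hempty, Set.ncard_empty, Nat.cast_zero]
    positivity
  set N := ((latticeBall R : Set (ι → ℤ)).ncard : ℝ)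
  set M := max 1 (R / √n)
  have hQ := one_le_norm_toEuclidean hq
  have hRM : R + √n ≤ 2 * √n * M := by
    have : R = √n * (R / √n) := (mul_div_cancel₀ R hs.ne').symm
    nlinarith [le_max_left 1 (R / √n), le_max_right 1 (R / √n)]
  have hMN : M ^ (n - 1) ≤ N ^ (((n : ℝ) - 1) / n) := by
    rw [← Nat.cast_pred hn]
    exact pow_le_rpow_div_of_pow_le (zero_le_one.trans (le_max_left _ _)) hn.ne'
      (max_one_pow_le_ncard_latticeBall hR) _
  calc _ ≤ n * (R + √n) ^ (n - 1) * (‖toEuclidean q‖ + 2 * √n) * V :=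
        ncard_leaving_latticeBall_le hR q
    _ ≤ n * ((2 * √n) ^ (n - 1) * N ^ (((n : ℝ) - 1) / n)) *
          ((1 + 2 * √n) * ‖toEuclidean q‖) * V := by
        gcongr
        · calc (R + √n) ^ (n - 1) ≤ (2 * √n * M) ^ (n - 1) := by gcongr
            _ = (2 * √n) ^ (n - 1) * M ^ (n - 1) := mul_pow _ _ _
            _ ≤ _ := by gcongr
        · nlinarith
    _ = _ := by ring

end LatticePoint

theorem latNorm_eq_norm_toEuclidean (k : Fin 3 → ℤ) :
    latNorm k = ‖LatticePoint.toEuclidean k‖ := by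
  simp [latNorm, EuclideanSpace.norm_eq]

/-- `|B_F ∩ (B_F^c + q)| ≤ C |q| N^{2/3}` uniformly in `k_F` and `q`. -/
theorem stmt1 :
    ∃ C > 0, ∀ kF : ℝ, 0 < kF → ∀ q : Fin 3 → ℤ,
      ((Set.ncard {k : Fin 3 → ℤ | latNorm k ≤ kF ∧ ¬ latNorm (k - q) ≤ kF} : ℝ))
        ≤ C * latNorm q *
          ((Set.ncard {k : Fin 3 → ℤ | latNorm k ≤ kF} : ℝ)) ^ ((2:ℝ)/3) := by
  obtain ⟨C, hC, hbound⟩ := LatticePoint.exists_ncard_leaving_latticeBall_le (ι := Fin 3)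
  refine ⟨C, hC, fun kF hkF q => ?_⟩
  have h := hbound kF hkF.le q
  norm_num [Fintype.card_fin] at h
  simp only [latNorm_eq_norm_toEuclidean]
  exact h
end

section
/- Suppose for each $k \in \mathbb{Z}^3$ the operators $b(k), b^*(k)$ on a Hilbert space satisfy $b^*(k)b(k) \leq CN\mathbb{H}_0$ and $b(k)b^*(k) \leq CN(\mathbb{H}_0 + \hbar)$ for a nonnegative operator $\mathbb{H}_0$. Then for every $k$, $-CN(\mathbb{H}_0 + \hbar) \leq b^*(k)b^*(-k) + b(-k)b(k) \leq CN(\mathbb{H}_0 + \hbar)$. Consequently, if $\hat{V} \geq 0$ with $\|\hat{V}\|_{\ell^1} < \infty$, then the bosonizable interaction $Q_B = \frac{1}{N}\sum_k \hat{V}(k)\big(b^*(k)b(k) + \frac{1}{2}(b^*(k)b^*(-k) + b(-k)b(k))\big)$ satisfies $-C'(\mathbb{H}_0 + \hbar) \leq Q_B \leq C'(\mathbb{H}_0 + \hbar)$. -/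
open scoped ComplexInnerProductSpace

/-!
Write `q ψ = ⟪ψ, H₀ψ⟫ + ℏ‖ψ‖²`. Both hypotheses bound `‖b(k)ψ‖²` and `‖b*(-k)ψ‖²` by `CN q ψ`,
and `⟪ψ, (b*(k)b*(-k) + b(-k)b(k))ψ⟫ = 2 Re⟪b(k)ψ, b*(-k)ψ⟫`, so Cauchy–Schwarz and
`2xy ≤ x² + y²` give the pairing bound. Summing the resulting bound `2CN q ψ` on each summand of
`Q_B` against the summable weights `V̂ ≥ 0` gives the bound on `Q_B`.
-/

section InnerProduct

variable {𝕜 E : Type*} [RCLike 𝕜] [SeminormedAddCommGroup E] [InnerProductSpace 𝕜 E]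

theorem abs_re_inner_le_of_norm_sq_le {u v : E} {a : ℝ} (hu : ‖u‖ ^ 2 ≤ a) (hv : ‖v‖ ^ 2 ≤ a) :
    |RCLike.re (inner 𝕜 u v)| ≤ a := by
  calc |RCLike.re (inner 𝕜 u v)| ≤ ‖u‖ * ‖v‖ :=
        (RCLike.abs_re_le_norm _).trans (norm_inner_le_norm u v)
    _ ≤ (‖u‖ ^ 2 + ‖v‖ ^ 2) / 2 := by nlinarith [sq_nonneg (‖u‖ - ‖v‖)]
    _ ≤ a := by linarith

theorem abs_norm_sq_add_re_inner_le_of_norm_sq_le {u v : E} {a : ℝ} (hu : ‖u‖ ^ 2 ≤ a)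
    (hv : ‖v‖ ^ 2 ≤ a) : |‖u‖ ^ 2 + RCLike.re (inner 𝕜 u v)| ≤ 2 * a := by
  calc |‖u‖ ^ 2 + RCLike.re (inner 𝕜 u v)| ≤ |‖u‖ ^ 2| + |RCLike.re (inner 𝕜 u v)| :=
        abs_add_le _ _
    _ ≤ 2 * a := by
      rw [abs_of_nonneg (by positivity)]
      linarith [abs_re_inner_le_of_norm_sq_le (𝕜 := 𝕜) hu hv]

end InnerProduct

/-- from `b*(k)b(k) ≤ CN H₀` and `b(k)b*(k) ≤ CN(H₀+ℏ)` one gets bounds on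
`b*(k)b*(-k) + b(-k)b(k)` and on the bosonizable interaction `Q_B` (as quadratic forms). -/
theorem stmt7 {H : Type*} [NormedAddCommGroup H] [InnerProductSpace ℂ H] [CompleteSpace H]
    (N hbar C : ℝ) (hN : 0 < N) (hhbar : 0 < hbar) (hC : 0 < C)
    (b : (Fin 3 → ℤ) → H →L[ℂ] H) (H0 : H →L[ℂ] H)
    (hH0 : ∀ ψ : H, 0 ≤ (⟪ψ, H0 ψ⟫).re)
    (hb1 : ∀ (k : Fin 3 → ℤ) (ψ : H), ‖b k ψ‖^2 ≤ C * N * (⟪ψ, H0 ψ⟫).re)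
    (hb2 : ∀ (k : Fin 3 → ℤ) (ψ : H),
      ‖(ContinuousLinearMap.adjoint (b k)) ψ‖^2
        ≤ C * N * ((⟪ψ, H0 ψ⟫).re + hbar * ‖ψ‖^2))
    (hatV : (Fin 3 → ℤ) → ℝ) (hVpos : ∀ k, 0 ≤ hatV k) (hVsum : Summable hatV) :
    (∃ C₁ > 0, ∀ (k : Fin 3 → ℤ) (ψ : H),
        |2 * (⟪b k ψ, (ContinuousLinearMap.adjoint (b (-k))) ψ⟫).re|
          ≤ C₁ * N * ((⟪ψ, H0 ψ⟫).re + hbar * ‖ψ‖^2)) ∧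
    ∃ C' > 0, ∀ ψ : H,
      |(1/N) * ∑' k : Fin 3 → ℤ, hatV k *
          (‖b k ψ‖^2 + (⟪b k ψ, (ContinuousLinearMap.adjoint (b (-k))) ψ⟫).re)|
        ≤ C' * ((⟪ψ, H0 ψ⟫).re + hbar * ‖ψ‖^2) := by
  set q : H → ℝ := fun ψ => (⟪ψ, H0 ψ⟫).re + hbar * ‖ψ‖ ^ 2
  have hq : ∀ ψ, 0 ≤ q ψ := fun ψ => add_nonneg (hH0 ψ) (by positivity)
  have hb1' : ∀ k ψ, ‖b k ψ‖ ^ 2 ≤ C * N * q ψ := fun k ψ =>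
    (hb1 k ψ).trans (by gcongr; exact le_add_of_nonneg_right (by positivity))
  refine ⟨⟨2 * C, by positivity, fun k ψ => ?_⟩, 2 * C * (∑' k, hatV k + 1), by
    have : 0 ≤ ∑' k, hatV k := tsum_nonneg hVpos; positivity, fun ψ => ?_⟩
  · rw [abs_mul, abs_two, mul_assoc 2 C, mul_assoc 2 (C * N)]
    exact mul_le_mul_of_nonneg_left
      (abs_re_inner_le_of_norm_sq_le (𝕜 := ℂ) (hb1' k ψ) (hb2 (-k) ψ)) zero_le_two
  · have hsum : |∑' k, hatV k * (‖b k ψ‖ ^ 2 + (⟪b k ψ, (b (-k)).adjoint ψ⟫).re)|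
        ≤ (∑' k, hatV k) * (2 * (C * N * q ψ)) := by
      rw [← Real.norm_eq_abs]
      refine tsum_of_norm_bounded (hVsum.hasSum.mul_right _) fun k => ?_
      rw [Real.norm_eq_abs, abs_mul, abs_of_nonneg (hVpos k)]
      exact mul_le_mul_of_nonneg_left
        (abs_norm_sq_add_re_inner_le_of_norm_sq_le (𝕜 := ℂ) (hb1' k ψ) (hb2 (-k) ψ)) (hVpos k)
    rw [abs_mul, abs_of_pos (one_div_pos.mpr hN)]
    calc 1 / N * |∑' k, hatV k * (‖b k ψ‖ ^ 2 + (⟪b k ψ, (b (-k)).adjoint ψ⟫).re)|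
        ≤ 1 / N * ((∑' k, hatV k) * (2 * (C * N * q ψ))) := by gcongr
      _ = 2 * C * (∑' k, hatV k) * q ψ := by field_simp
      _ ≤ 2 * C * (∑' k, hatV k + 1) * q ψ := by
        gcongr
        exacts [hq ψ, le_add_of_nonneg_right zero_le_one]
end

section
/- Let $J$ be a symmetric matrix with $0 \leq J \leq 1 - c$ for some $0 < c \leq 1$. Then $\frac{1}{\sqrt{1-J}} - 1 = \frac{1}{\pi}\int_0^\infty \frac{ds}{\sqrt{s}}\,\frac{1}{s+1-J}\, J\, \frac{1}{s+1}$, and there exists $C$ depending only on $c$ such that $\big\|(1-J)^{-1/2} - 1\big\|_{\mathrm{HS}} \leq C \|J\|_{\mathrm{HS}}$. Similarly, for a symmetric matrix $W \geq 0$, $\big\|(1+W)^{-1/2} - 1\big\|_{\mathrm{HS}} \leq C\|W\|_{\mathrm{HS}}$ with an absolute constant $C$. -/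
/-!
Diagonalize `J = U diag(λ) Uᵀ`. Uniqueness of positive square roots forces
`S = U diag((1 - λ)^(-1/2)) Uᵀ`, and `(s + 1 - J)⁻¹ J = U diag(λ / (s + 1 - λ)) Uᵀ`, so both claims
reduce to scalar facts about each eigenvalue. The integral comes from partial fractions and
`∫₀^∞ s^(-1/2) (s + a)⁻¹ ds = π / √a` (antiderivative `(2 / √a) arctan √(s / a)`). Since the
Hilbert–Schmidt norm of `U diag(d) Uᵀ` is the `ℓ²` norm of `d`, the bounds come from
`|x^(-1/2) - 1| ≤ c^(-1/2) |x - 1|` for `x ≥ c`, applied with `x = 1 - λ` and with `x = 1 + μ`,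
`c = 1`.
-/

open Matrix MeasureTheory

/-- Hilbert–Schmidt (Frobenius) norm of a real square matrix. -/
noncomputable def hsNorm {n : Type*} [Fintype n] (M : Matrix n n ℝ) : ℝ :=
  Real.sqrt (∑ i, ∑ j, (M i j)^2)

open Real Set Filter Topology

section
variable {a : ℝ}

lemma hasDerivAt_arctan_sqrt_div_sqrt (ha : 0 < a) {s : ℝ} (hs : 0 < s) :
    HasDerivAt (fun s ↦ 2 / √a * arctan (√s / √a)) ((√s)⁻¹ * (s + a)⁻¹) s := by
  have h := (((hasDerivAt_sqrt hs.ne').div_const (√a)).arctan).const_mul (2 / √a)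
  refine h.congr_deriv ?_
  have hsa : 0 < √a := sqrt_pos.2 ha
  have hss : 0 < √s := sqrt_pos.2 hs
  field_simp
  rw [sq_sqrt hs.le, sq_sqrt ha.le]
  ring

lemma tendsto_arctan_sqrt_div_sqrt_atTop (ha : 0 < a) :
    Tendsto (fun s ↦ 2 / √a * arctan (√s / √a)) atTop (𝓝 (π / √a)) := by
  have h := (tendsto_nhds_of_tendsto_nhdsWithin tendsto_arctan_atTop).comp
    (tendsto_sqrt_atTop.atTop_div_const (sqrt_pos.2 ha))
  rw [show π / √a = 2 / √a * (π / 2) by ring]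
  exact h.const_mul _

lemma integrableOn_inv_sqrt_mul_inv_add (ha : 0 < a) :
    IntegrableOn (fun s ↦ (√s)⁻¹ * (s + a)⁻¹) (Ioi 0) :=
  integrableOn_Ioi_deriv_of_nonneg (by fun_prop)
    (fun _ hs ↦ hasDerivAt_arctan_sqrt_div_sqrt ha hs) (fun s (hs : 0 < s) ↦ by positivity)
    (tendsto_arctan_sqrt_div_sqrt_atTop ha)

lemma integral_inv_sqrt_mul_inv_add (ha : 0 < a) :
    ∫ s in Ioi 0, (√s)⁻¹ * (s + a)⁻¹ = π / √a := by
  rw [integral_Ioi_of_hasDerivAt_of_nonneg (by fun_prop)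
    (fun _ hs ↦ hasDerivAt_arctan_sqrt_div_sqrt ha hs) (fun s (hs : 0 < s) ↦ by positivity)
    (tendsto_arctan_sqrt_div_sqrt_atTop ha)]
  simp

end

section
variable {l : ℝ}

lemma inv_sqrt_mul_resolvent_eq_sub {s : ℝ} (hl : l < 1) (hs : 0 < s) :
    (√s)⁻¹ * ((s + (1 - l))⁻¹ * l * (s + 1)⁻¹)
      = (√s)⁻¹ * (s + (1 - l))⁻¹ - (√s)⁻¹ * (s + 1)⁻¹ := by
  have : s + (1 - l) ≠ 0 := by linarith
  have : s + 1 ≠ 0 := by linarith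
  field_simp
  ring

lemma integrableOn_inv_sqrt_mul_resolvent (hl : l < 1) :
    IntegrableOn (fun s ↦ (√s)⁻¹ * ((s + (1 - l))⁻¹ * l * (s + 1)⁻¹)) (Ioi 0) :=
  (integrableOn_congr_fun (fun _ hs ↦ inv_sqrt_mul_resolvent_eq_sub hl hs) measurableSet_Ioi).2 <|
    (integrableOn_inv_sqrt_mul_inv_add (by linarith)).sub
      (integrableOn_inv_sqrt_mul_inv_add one_pos)

lemma integral_inv_sqrt_mul_resolvent (hl : l < 1) :
    ∫ s in Ioi 0, (√s)⁻¹ * ((s + (1 - l))⁻¹ * l * (s + 1)⁻¹) = π * ((√(1 - l))⁻¹ - 1) := by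
  rw [setIntegral_congr_fun measurableSet_Ioi (fun _ hs ↦ inv_sqrt_mul_resolvent_eq_sub hl hs),
    integral_sub (integrableOn_inv_sqrt_mul_inv_add (by linarith))
      (integrableOn_inv_sqrt_mul_inv_add one_pos),
    integral_inv_sqrt_mul_inv_add (by linarith), integral_inv_sqrt_mul_inv_add one_pos]
  simp [div_eq_mul_inv, mul_sub]

end

lemma abs_inv_sqrt_sub_one_le {c x : ℝ} (hc : 0 < c) (hcx : c ≤ x) :
    |(√x)⁻¹ - 1| ≤ (√c)⁻¹ * |x - 1| := by
  have hsc : 0 < √c := sqrt_pos.2 hc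
  have ht : √c ≤ √x := sqrt_le_sqrt hcx
  have ht0 : 0 < √x := hsc.trans_le ht
  have hx : x - 1 = (√x - 1) * (√x + 1) := by
    linear_combination -sq_sqrt (hc.le.trans hcx)
  have h1 : (√x)⁻¹ - 1 = -(√x - 1) * (√x)⁻¹ := by field_simp; ring
  rw [h1, hx, abs_mul, abs_mul, abs_neg, abs_inv, abs_of_pos ht0,
    abs_of_pos (by positivity : 0 < √x + 1)]
  calc |√x - 1| * (√x)⁻¹ ≤ |√x - 1| * (√c)⁻¹ := by gcongr
    _ ≤ |√x - 1| * ((√c)⁻¹ * (√x + 1)) := by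
        gcongr
        exact le_mul_of_one_le_right (by positivity) (by linarith)
    _ = _ := by ring

namespace Matrix
open Unitary

variable {n : Type*} [Fintype n] [DecidableEq n]

noncomputable def conjDiag (u : unitaryGroup n ℝ) : (n → ℝ) →ₐ[ℝ] Matrix n n ℝ :=
  (conjStarAlgAut ℝ (Matrix n n ℝ) u).toAlgEquiv.toAlgHom.comp (diagonalAlgHom ℝ)

variable (u : unitaryGroup n ℝ)

lemma conjDiag_apply (d : n → ℝ) : conjDiag u d = u * diagonal d * star (u : Matrix n n ℝ) := rfl

lemma conjDiag_apply_apply (d : n → ℝ) (i j : n) :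
    conjDiag u d i j = ∑ k, u i k * u j k * d k := by
  rw [conjDiag_apply, mul_apply]
  simp only [mul_diagonal, star_eq_conjTranspose, conjTranspose_apply, star_trivial]
  exact Finset.sum_congr rfl fun k _ ↦ by ring

lemma posSemidef_conjDiag_iff {d : n → ℝ} : (conjDiag u d).PosSemidef ↔ ∀ k, 0 ≤ d k := by
  simp [conjDiag_apply, isUnit_coe.posSemidef_star_right_conjugate_iff, posSemidef_diagonal_iff]

lemma conjDiag_inv {d : n → ℝ} (hd : ∀ k, d k ≠ 0) : (conjDiag u d)⁻¹ = conjDiag u d⁻¹ := by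
  refine inv_eq_right_inv ?_
  rw [← map_mul, ← map_one (conjDiag u)]
  congr 1
  ext k
  simp [hd k]

lemma transpose_conjDiag (d : n → ℝ) : (conjDiag u d)ᵀ = conjDiag u d := by
  simp [conjDiag_apply, transpose_mul, star_eq_conjTranspose, Matrix.mul_assoc]

lemma exists_eq_conjDiag {A : Matrix n n ℝ} (hA : A.IsHermitian) : ∃ u d, A = conjDiag u d :=
  ⟨hA.eigenvectorUnitary, hA.eigenvalues, by
    simpa [RCLike.ofReal_real_eq_id, conjDiag_apply] using hA.spectral_theorem⟩

lemma trace_conjDiag (d : n → ℝ) : trace (conjDiag u d) = ∑ k, d k := by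
  rw [conjDiag_apply, trace_mul_cycle, coe_star_mul_self, Matrix.one_mul, trace_diagonal]

lemma eq_conjDiag_inv_sqrt {S : Matrix n n ℝ} (hS : S.PosSemidef) {d : n → ℝ} (hd : ∀ k, 0 < d k)
    (hSS : S * S = (conjDiag u d)⁻¹) : S = conjDiag u fun k ↦ (√(d k))⁻¹ := by
  open scoped MatrixOrder in
  refine (CFC.sq_eq_sq_iff S _ hS.nonneg ((posSemidef_conjDiag_iff u).2 fun k ↦ ?_).nonneg).1 ?_
  · exact inv_nonneg.2 (Real.sqrt_nonneg _)
  · rw [sq, sq, hSS, conjDiag_inv u fun k ↦ (hd k).ne', ← map_mul]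
    congr 1
    ext k
    simp [← mul_inv, Real.mul_self_sqrt (hd k).le]

lemma resolvent_mul_conjDiag {s : ℝ} {l : n → ℝ} (hl : ∀ k, s + (1 - l k) ≠ 0) :
    (s • 1 + (1 - conjDiag u l))⁻¹ * conjDiag u l
      = conjDiag u fun k ↦ (s + (1 - l k))⁻¹ * l k := by
  have h : s • 1 + (1 - conjDiag u l) = conjDiag u fun k ↦ s + (1 - l k) := by
    rw [show (fun k ↦ s + (1 - l k)) = s • 1 + (1 - l) by ext; simp, map_add, map_sub, map_smul,
      map_one]
  rw [h, conjDiag_inv u hl, ← map_mul]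
  rfl

end Matrix

lemma sum_sq_eq_trace_transpose_mul_self {R m n : Type*} [CommSemiring R] [Fintype m] [Fintype n]
    (M : Matrix m n R) :
    ∑ i, ∑ j, M i j ^ 2 = trace (Mᵀ * M) := by
  rw [Finset.sum_comm]
  simp [trace, mul_apply, sq]

section
open Matrix
variable {n : Type*} [Fintype n] [DecidableEq n] (u : unitaryGroup n ℝ)

lemma hsNorm_conjDiag (d : n → ℝ) : hsNorm (conjDiag u d) = √(∑ k, d k ^ 2) := by
  rw [hsNorm, sum_sq_eq_trace_transpose_mul_self, transpose_conjDiag, ← map_mul, trace_conjDiag]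
  simp [sq]

lemma hsNorm_conjDiag_le {C : ℝ} (hC : 0 ≤ C) {d e : n → ℝ} (h : ∀ k, |e k| ≤ C * |d k|) :
    hsNorm (conjDiag u e) ≤ C * hsNorm (conjDiag u d) := by
  rw [hsNorm_conjDiag, hsNorm_conjDiag]
  calc √(∑ k, e k ^ 2) ≤ √(∑ k, (C * d k) ^ 2) :=
        Real.sqrt_le_sqrt <| Finset.sum_le_sum fun k _ ↦
          sq_le_sq.2 <| by rw [abs_mul, abs_of_nonneg hC]; exact h k
    _ = C * √(∑ k, d k ^ 2) := by
        simp_rw [mul_pow, ← Finset.mul_sum]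
        rw [Real.sqrt_mul (sq_nonneg C), Real.sqrt_sq hC]

lemma conjDiag_inv_sqrt_one_sub_sub_one_apply_eq_integral {l : n → ℝ} (hl : ∀ k, l k < 1)
    (i j : n) :
    conjDiag u (fun k ↦ (√(1 - l k))⁻¹ - 1) i j
      = 1 / π * ∫ s in Ioi 0,
          (√s)⁻¹ * (((s • 1 + (1 - conjDiag u l))⁻¹ * conjDiag u l) i j * (s + 1)⁻¹) := by
  have hintegrand : ∀ s ∈ Ioi (0 : ℝ),
      (√s)⁻¹ * (((s • 1 + (1 - conjDiag u l))⁻¹ * conjDiag u l) i j * (s + 1)⁻¹)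
        = ∑ k, u i k * u j k * ((√s)⁻¹ * ((s + (1 - l k))⁻¹ * l k * (s + 1)⁻¹)) := by
    intro s hs
    have hs : 0 < s := hs
    rw [resolvent_mul_conjDiag u fun k ↦ by linarith [hl k], conjDiag_apply_apply, Finset.sum_mul,
      Finset.mul_sum]
    exact Finset.sum_congr rfl fun k _ ↦ by ring
  rw [setIntegral_congr_fun measurableSet_Ioi hintegrand, integral_finsetSum _
      fun k _ ↦ (integrableOn_inv_sqrt_mul_resolvent (hl k)).const_mul _,
    conjDiag_apply_apply, Finset.mul_sum]
  refine Finset.sum_congr rfl fun k _ ↦ ?_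
  rw [integral_const_mul, integral_inv_sqrt_mul_resolvent (hl k)]
  field_simp

end

theorem stmt15_general (c : ℝ) (hc0 : 0 < c) :
    (∃ C > 0, ∀ (n : Type) [Fintype n] [DecidableEq n],
      ∀ J S : Matrix n n ℝ, J.PosSemidef →
        (((1 - c) • (1 : Matrix n n ℝ)) - J).PosSemidef →
        S.PosSemidef → S * S = ((1 : Matrix n n ℝ) - J)⁻¹ →
        (∀ i j, (S - 1) i j
          = (1/Real.pi) * ∫ s in Set.Ioi (0:ℝ), (Real.sqrt s)⁻¹ *
              ((((s • (1 : Matrix n n ℝ) + ((1 : Matrix n n ℝ) - J))⁻¹ * J) i j)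
                * (s+1)⁻¹))
        ∧ hsNorm (S - 1) ≤ C * hsNorm J)
    ∧ ∃ C' > 0, ∀ (n : Type) [Fintype n] [DecidableEq n],
        ∀ W T : Matrix n n ℝ, W.PosSemidef →
          T.PosSemidef → T * T = ((1 : Matrix n n ℝ) + W)⁻¹ →
          hsNorm (T - 1) ≤ C' * hsNorm W := by
  refine ⟨⟨(√c)⁻¹, by positivity, fun n _ _ J S hJ hJc hS hSS ↦ ?_⟩,
    ⟨1, one_pos, fun n _ _ W T hW hT hTT ↦ ?_⟩⟩
  · obtain ⟨u, l, rfl⟩ := exists_eq_conjDiag hJ.1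
    have hl : ∀ k, c ≤ 1 - l k := fun k ↦ le_sub_comm.2 <| by
      simpa using (posSemidef_conjDiag_iff u (d := (1 - c) • 1 - l)).1 (by simpa using hJc) k
    rw [← map_one (conjDiag u), ← map_sub] at hSS
    have hS1 : S - 1 = conjDiag u fun k ↦ (√(1 - l k))⁻¹ - 1 := by
      rw [eq_conjDiag_inv_sqrt u hS (fun k ↦ hc0.trans_le (hl k)) hSS, ← map_one (conjDiag u),
        ← map_sub]
      rfl
    rw [hS1]
    refine ⟨conjDiag_inv_sqrt_one_sub_sub_one_apply_eq_integral u fun k ↦ ?_,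
      hsNorm_conjDiag_le u (by positivity) fun k ↦ ?_⟩
    · linarith [hl k]
    · simpa using abs_inv_sqrt_sub_one_le hc0 (hl k)
  · obtain ⟨u, m, rfl⟩ := exists_eq_conjDiag hW.1
    have hm : ∀ k, 0 ≤ m k := (posSemidef_conjDiag_iff u).1 hW
    rw [← map_one (conjDiag u), ← map_add] at hTT
    rw [eq_conjDiag_inv_sqrt u hT (fun k ↦ show 0 < 1 + m k by linarith [hm k]) hTT,
      ← map_one (conjDiag u), ← map_sub]
    exact hsNorm_conjDiag_le u zero_le_one fun k ↦ by
      simpa using abs_inv_sqrt_sub_one_le one_pos (show 1 ≤ 1 + m k by linarith [hm k])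

/-- integral representation and Hilbert–Schmidt bounds for
`(1-J)^{-1/2} - 1` and `(1+W)^{-1/2} - 1`. -/
theorem stmt15 (c : ℝ) (hc0 : 0 < c) (hc1 : c ≤ 1) :
    (∃ C > 0, ∀ (n : Type) [Fintype n] [DecidableEq n],
      ∀ J S : Matrix n n ℝ, J.PosSemidef →
        (((1 - c) • (1 : Matrix n n ℝ)) - J).PosSemidef →
        S.PosSemidef → S * S = ((1 : Matrix n n ℝ) - J)⁻¹ →
        (∀ i j, (S - 1) i j
          = (1/Real.pi) * ∫ s in Set.Ioi (0:ℝ), (Real.sqrt s)⁻¹ *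
              ((((s • (1 : Matrix n n ℝ) + ((1 : Matrix n n ℝ) - J))⁻¹ * J) i j)
                * (s+1)⁻¹))
        ∧ hsNorm (S - 1) ≤ C * hsNorm J)
    ∧ ∃ C' > 0, ∀ (n : Type) [Fintype n] [DecidableEq n],
        ∀ W T : Matrix n n ℝ, W.PosSemidef →
          T.PosSemidef → T * T = ((1 : Matrix n n ℝ) + W)⁻¹ →
          hsNorm (T - 1) ≤ C' * hsNorm W :=
  stmt15_general c hc0
end
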